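/- Let α ∈ (0,2). Then ∫_{ℝ²}∫_{ℝ²} e^{U(x)} e^{U(y)} |x−y|^{−α} dy dx = 2(4−α)π, where U(x) := ((4−α)/2)·log(C_α/(1+|x|²)) and C_α := ((2−α)(4−α)/π)^{1/(4−α)}. -/

import Mathlib

open MeasureTheory Real

noncomputable def Ca (α : ℝ) : ℝ := ((2 - α) * (4 - α) / Real.pi) ^ ((1 : ℝ) / (4 - α))

noncomputable def U (α : ℝ) (x : EuclideanSpace ℝ (Fin 2)) : ℝ :=
  ((4 - α) / 2) * Real.log (Ca α / (1 + ‖x‖ ^ 2))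

/-!
Write `σ z = (1 + ‖z‖²)⁻²` and `d(z, w) = ‖z - w‖² / ((1 + ‖z‖²)(1 + ‖w‖²))`: up to constants, the
pull-backs under stereographic projection of the area measure and of the squared chordal distance
of the round sphere. Since `exp (U α x) = Ca α ^ ((4 - α) / 2) * σ x * (1 + ‖x‖²) ^ (α / 2)`, the
integrand is `Ca α ^ (4 - α) * σ x * σ y * d(x, y) ^ (-α / 2)`. The Möbius maps
`z ↦ (z + a) / (1 - conj a * z)` are rotations of the Riemann sphere sending `0` to `a`; they
preserve `σ z dz` and satisfy `d(a, φ z) = d(0, z)`, so the inner integral does not depend on `x`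
and equals its radial value at `x = 0`, namely `π / (1 - α / 2)`. With `∫ σ = π` and
`Ca α ^ (4 - α) = (2 - α)(4 - α) / π` this gives `2 (4 - α) π`.
-/

open Set ComplexConjugate Module

noncomputable def sphericalDensity {E : Type*} [SeminormedAddCommGroup E] (x : E) : ℝ :=
  ((1 + ‖x‖ ^ 2) ^ 2)⁻¹

noncomputable def chordalSq {E : Type*} [SeminormedAddCommGroup E] (x y : E) : ℝ :=
  ‖x - y‖ ^ 2 / ((1 + ‖x‖ ^ 2) * (1 + ‖y‖ ^ 2))

lemma hasDerivAt_sq_div_one_add_sq (r : ℝ) :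
    HasDerivAt (fun t : ℝ => t ^ 2 / (1 + t ^ 2)) (2 * r / (1 + r ^ 2) ^ 2) r := by
  refine ((hasDerivAt_pow 2 r).div ((hasDerivAt_pow 2 r).const_add 1) (by positivity)).congr_deriv ?_
  ring

lemma tendsto_sq_div_one_add_sq_atTop :
    Filter.Tendsto (fun t : ℝ => t ^ 2 / (1 + t ^ 2)) Filter.atTop (nhds 1) := by
  have h : Filter.Tendsto (fun t : ℝ => 1 + t ^ 2) Filter.atTop Filter.atTop :=
    Filter.tendsto_atTop_add_const_left _ 1 (Filter.tendsto_pow_atTop two_ne_zero)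
  have := (tendsto_const_nhds (x := (1:ℝ))).sub h.inv_tendsto_atTop
  simp only [sub_zero] at this
  refine this.congr fun t => ?_
  simp only [Pi.inv_apply]
  field_simp
  ring

lemma integral_Ioi_radial_sphericalDensity_mul_rpow {s : ℝ} (hs : -1 < s) :
    ∫ r in Ioi (0 : ℝ), r * (((1 + r ^ 2) ^ 2)⁻¹ * (r ^ 2 / (1 + r ^ 2)) ^ s)
      = 1 / (2 * (s + 1)) := by
  have hs' : 0 < s + 1 := by linarith
  let F : ℝ → ℝ := fun t => (t ^ 2 / (1 + t ^ 2)) ^ (s + 1) / (2 * (s + 1))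
  have hcont : ContinuousWithinAt F (Ici 0) 0 :=
    (((hasDerivAt_sq_div_one_add_sq 0).continuousAt.rpow_const (Or.inr hs'.le)).div_const
      _).continuousWithinAt
  have hderiv : ∀ r ∈ Ioi (0 : ℝ),
      HasDerivAt F (r * (((1 + r ^ 2) ^ 2)⁻¹ * (r ^ 2 / (1 + r ^ 2)) ^ s)) r := by
    intro r hr
    have hr : (0 : ℝ) < r := hr
    refine (((hasDerivAt_sq_div_one_add_sq r).rpow_const (p := s + 1)
      (Or.inl (by positivity))).div_const (2 * (s + 1))).congr_deriv ?_
    rw [add_sub_cancel_right]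
    field_simp
  have hlim : Filter.Tendsto F Filter.atTop (nhds (1 / (2 * (s + 1)))) := by
    simpa using (tendsto_sq_div_one_add_sq_atTop.rpow_const (Or.inr hs'.le)).div_const
      (2 * (s + 1))
  have key := integral_Ioi_of_hasDerivAt_of_nonneg hcont hderiv
    (fun r (hr : 0 < r) => by positivity) hlim
  simpa [F, zero_rpow hs'.ne'] using key

lemma integral_sphericalDensity_mul_chordalSq_zero_rpow {s : ℝ} (hs : -1 < s) :
    ∫ z : ℂ, sphericalDensity z * chordalSq 0 z ^ s = π / (s + 1) := by
  have h := integral_fun_norm_addHaar (volume : Measure ℂ)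
    (fun r => ((1 + r ^ 2) ^ 2)⁻¹ * (r ^ 2 / (1 + r ^ 2)) ^ s)
  simp only [Complex.finrank_real_complex, Nat.add_one_sub_one, pow_one, smul_eq_mul,
    integral_Ioi_radial_sphericalDensity_mul_rpow hs, Measure.real, Complex.volume_ball] at h
  simp only [sphericalDensity, chordalSq, zero_sub, norm_neg, norm_zero, zero_pow two_ne_zero,
    add_zero, one_mul, h]
  norm_num [nsmul_eq_mul]
  field_simp

noncomputable def moebius (a z : ℂ) : ℂ := (z + a) / (1 - conj a * z)

lemma one_add_conj_mul_self (a : ℂ) : 1 + conj a * a = ((1 + ‖a‖ ^ 2 : ℝ) : ℂ) := by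
  rw [Complex.conj_mul']; push_cast; ring

lemma norm_add_sq_add_norm_one_sub_conj_mul_sq (a z : ℂ) :
    ‖z + a‖ ^ 2 + ‖1 - conj a * z‖ ^ 2 = (1 + ‖a‖ ^ 2) * (1 + ‖z‖ ^ 2) := by
  simp only [← Complex.normSq_eq_norm_sq, Complex.normSq_apply, Complex.mul_re, Complex.mul_im,
    Complex.sub_re, Complex.sub_im, Complex.add_re, Complex.add_im,
    Complex.conj_re, Complex.conj_im, Complex.one_re, Complex.one_im]
  ring

lemma volume_setOf_one_sub_mul_eq_zero (c : ℂ) : volume {z : ℂ | 1 - c * z = 0} = 0 := by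
  refine Set.Subsingleton.measure_zero (fun z hz w hw => ?_) _
  simp only [mem_ofPred_eq] at hz hw
  have hc : c ≠ 0 := by rintro rfl; simp at hz
  exact mul_left_cancel₀ hc (by linear_combination hw - hz)

lemma hasDerivAt_moebius (a : ℂ) {z : ℂ} (hz : 1 - conj a * z ≠ 0) :
    HasDerivAt (moebius a) ((1 + ‖a‖ ^ 2 : ℝ) / (1 - conj a * z) ^ 2) z := by
  have h := ((hasDerivAt_id z).add_const a).div
    (((hasDerivAt_id z).const_mul (conj a)).const_sub 1) hz
  refine h.congr_deriv ?_
  rw [← one_add_conj_mul_self]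
  simp only [id]
  ring

lemma moebius_injOn (a : ℂ) : InjOn (moebius a) {z | 1 - conj a * z ≠ 0} := by
  intro z hz w hw h
  rw [moebius, moebius, div_eq_div_iff hz hw] at h
  have h' : ((1 + ‖a‖ ^ 2 : ℝ) : ℂ) * (z - w) = 0 := by
    rw [← one_add_conj_mul_self]; linear_combination h
  exact sub_eq_zero.mp ((mul_eq_zero.mp h').resolve_left (by norm_cast; positivity))

lemma moebius_neg_apply (a w : ℂ) : moebius (-a) w = (w - a) / (1 + conj a * w) := by
  simp only [moebius, map_neg, sub_eq_add_neg, neg_mul, neg_neg]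

lemma one_sub_conj_mul_moebius_neg (a : ℂ) {w : ℂ} (hw : 1 + conj a * w ≠ 0) :
    1 - conj a * moebius (-a) w = (1 + ‖a‖ ^ 2 : ℝ) / (1 + conj a * w) := by
  rw [moebius_neg_apply, ← one_add_conj_mul_self]
  field_simp
  ring

lemma moebius_moebius_neg (a : ℂ) {w : ℂ} (hw : 1 + conj a * w ≠ 0) :
    moebius a (moebius (-a) w) = w := by
  have hA : ((1 + ‖a‖ ^ 2 : ℝ) : ℂ) ≠ 0 := by norm_cast; positivity
  rw [moebius, one_sub_conj_mul_moebius_neg a hw, div_eq_iff (div_ne_zero hA hw),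
    moebius_neg_apply, ← one_add_conj_mul_self, div_add' _ _ _ hw, mul_div_assoc',
    div_left_inj' hw]
  ring

section
variable (a : ℂ) {z : ℂ} (hz : 1 - conj a * z ≠ 0)
include hz

lemma one_add_norm_moebius_sq :
    1 + ‖moebius a z‖ ^ 2 = (1 + ‖a‖ ^ 2) * (1 + ‖z‖ ^ 2) / ‖1 - conj a * z‖ ^ 2 := by
  have hm : ‖1 - conj a * z‖ ≠ 0 := norm_ne_zero_iff.mpr hz
  rw [moebius, norm_div, div_pow, ← norm_add_sq_add_norm_one_sub_conj_mul_sq, add_div,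
    div_self (pow_ne_zero 2 hm), add_comm]

lemma norm_sub_moebius :
    ‖a - moebius a z‖ = (1 + ‖a‖ ^ 2) * ‖z‖ / ‖1 - conj a * z‖ := by
  have h : a - moebius a z = -(((1 + ‖a‖ ^ 2 : ℝ) : ℂ) * z) / (1 - conj a * z) := by
    rw [moebius, sub_div' hz, ← one_add_conj_mul_self]
    ring
  rw [h, norm_div, norm_neg, norm_mul, Complex.norm_real, Real.norm_of_nonneg (by positivity)]

lemma chordalSq_moebius : chordalSq a (moebius a z) = chordalSq 0 z := by
  have hm : ‖1 - conj a * z‖ ≠ 0 := norm_ne_zero_iff.mpr hz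
  rw [chordalSq, chordalSq, norm_sub_moebius a hz, one_add_norm_moebius_sq a hz]
  simp only [zero_sub, norm_neg, norm_zero, zero_pow two_ne_zero, add_zero, one_mul]
  field_simp

lemma norm_deriv_moebius_sq_mul_sphericalDensity :
    ‖((1 + ‖a‖ ^ 2 : ℝ) : ℂ) / (1 - conj a * z) ^ 2‖ ^ 2 * sphericalDensity (moebius a z)
      = sphericalDensity z := by
  have hm : ‖1 - conj a * z‖ ≠ 0 := norm_ne_zero_iff.mpr hz
  rw [sphericalDensity, sphericalDensity, one_add_norm_moebius_sq a hz, norm_div, norm_pow,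
    Complex.norm_real, Real.norm_of_nonneg (by positivity)]
  field_simp
end

lemma abs_det_restrictScalars_smulRight (c : ℂ) :
    |(((1 : ℂ →L[ℂ] ℂ).smulRight c).restrictScalars ℝ).det| = ‖c‖ ^ 2 := by
  simp [ContinuousLinearMap.det, LinearMap.det_restrictScalars, Algebra.norm_complex_eq,
    Complex.normSq_eq_norm_sq]

lemma integral_sphericalDensity_mul_comp_moebius (a : ℂ) (g : ℂ → ℝ) :
    ∫ z, sphericalDensity z * g (moebius a z) = ∫ w, sphericalDensity w * g w := by
  set s := {z : ℂ | 1 - conj a * z ≠ 0}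
  have hs : MeasurableSet s :=
    (measurableSet_eq_fun (by fun_prop) measurable_const).compl
  have hs_ae : s =ᵐ[volume] univ := by
    refine ae_eq_univ.mpr ?_
    simpa [s, compl_ofPred] using volume_setOf_one_sub_mul_eq_zero (conj a)
  have himage_ae : moebius a '' s =ᵐ[volume] univ := by
    refine ae_eq_univ.mpr (measure_mono_null (fun w hw => ?_)
      (volume_setOf_one_sub_mul_eq_zero (conj (-a))))
    by_contra hw'
    have hw' : 1 + conj a * w ≠ 0 := by simpa using hw'
    refine hw ⟨moebius (-a) w, ?_, moebius_moebius_neg a hw'⟩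
    rw [mem_ofPred_eq, one_sub_conj_mul_moebius_neg a hw']
    exact div_ne_zero (by norm_cast; positivity) hw'
  set f' : ℂ → ℂ →L[ℝ] ℂ := fun z =>
    ((1 : ℂ →L[ℂ] ℂ).smulRight (((1 + ‖a‖ ^ 2 : ℝ) : ℂ) / (1 - conj a * z) ^ 2)).restrictScalars ℝ
  have hderiv : ∀ z ∈ s, HasFDerivWithinAt (moebius a) (f' z) s z :=
    fun z hz => ((hasDerivAt_moebius a hz).hasFDerivAt.restrictScalars ℝ).hasFDerivWithinAt
  calc ∫ z, sphericalDensity z * g (moebius a z)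
      = ∫ z in s, sphericalDensity z * g (moebius a z) := by
        rw [setIntegral_congr_set hs_ae, setIntegral_univ]
    _ = ∫ z in s, |(f' z).det| • (sphericalDensity (moebius a z) * g (moebius a z)) := by
        refine setIntegral_congr_fun hs fun z hz => ?_
        rw [abs_det_restrictScalars_smulRight, smul_eq_mul, ← mul_assoc,
          norm_deriv_moebius_sq_mul_sphericalDensity a hz]
    _ = ∫ w in moebius a '' s, sphericalDensity w * g w := by
        rw [integral_image_eq_integral_abs_det_fderiv_smul volume hs hderiv (moebius_injOn a)]
    _ = ∫ w, sphericalDensity w * g w := by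
        rw [setIntegral_congr_set himage_ae, setIntegral_univ]

lemma integral_sphericalDensity_mul_chordalSq_rpow_complex (a : ℂ) {s : ℝ} (hs : -1 < s) :
    ∫ w : ℂ, sphericalDensity w * chordalSq a w ^ s = π / (s + 1) := by
  rw [← integral_sphericalDensity_mul_comp_moebius a (fun w => chordalSq a w ^ s),
    ← integral_sphericalDensity_mul_chordalSq_zero_rpow hs]
  refine integral_congr_ae ?_
  filter_upwards [measure_eq_zero_iff_ae_notMem.mp (volume_setOf_one_sub_mul_eq_zero (conj a))]
    with z hz
  rw [chordalSq_moebius a hz]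

section
variable {E F : Type*} [SeminormedAddCommGroup E] [SeminormedAddCommGroup F] [NormedSpace ℝ E]
  [NormedSpace ℝ F]

lemma sphericalDensity_map (e : E ≃ₗᵢ[ℝ] F) (x : E) :
    sphericalDensity (e x) = sphericalDensity x := by
  simp [sphericalDensity]

lemma chordalSq_map (e : E ≃ₗᵢ[ℝ] F) (x y : E) :
    chordalSq (e x) (e y) = chordalSq x y := by
  simp [chordalSq, ← map_sub]
end

section
variable {E : Type*} [NormedAddCommGroup E] [InnerProductSpace ℝ E] [FiniteDimensional ℝ E]
  [MeasurableSpace E] [BorelSpace E]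

lemma integral_sphericalDensity_mul_chordalSq_rpow (hE : finrank ℝ E = 2) (x : E) {s : ℝ}
    (hs : -1 < s) : ∫ y : E, sphericalDensity y * chordalSq x y ^ s = π / (s + 1) := by
  let e : ℂ ≃ₗᵢ[ℝ] E := Complex.orthonormalBasisOneI.repr.trans
    ((stdOrthonormalBasis ℝ E).reindex (finCongr hE)).repr.symm
  obtain ⟨a, rfl⟩ := e.surjective x
  rw [← e.measurePreserving.integral_comp e.toHomeomorph.measurableEmbedding]
  simpa only [sphericalDensity_map, chordalSq_map] using
    integral_sphericalDensity_mul_chordalSq_rpow_complex a hs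

lemma integral_sphericalDensity (hE : finrank ℝ E = 2) : ∫ y : E, sphericalDensity y = π := by
  simpa using integral_sphericalDensity_mul_chordalSq_rpow hE 0 (s := 0) (by norm_num)
end

lemma Ca_pos {α : ℝ} (hα : α < 2) : 0 < Ca α :=
  rpow_pos_of_pos (div_pos (mul_pos (by linarith) (by linarith)) pi_pos) _

lemma Ca_rpow {α : ℝ} (hα : α < 2) : Ca α ^ (4 - α) = (2 - α) * (4 - α) / π := by
  have h2 : 0 < 2 - α := by linarith
  have h4 : 0 < 4 - α := by linarith
  rw [Ca, ← rpow_mul (by have := pi_pos; positivity), one_div_mul_cancel h4.ne', rpow_one]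

lemma exp_U {α : ℝ} (hα : α < 2) (x : EuclideanSpace ℝ (Fin 2)) :
    exp (U α x) = Ca α ^ ((4 - α) / 2) * (sphericalDensity x * (1 + ‖x‖ ^ 2) ^ (α / 2)) := by
  have hC := Ca_pos hα
  have hp : 0 < 1 + ‖x‖ ^ 2 := by positivity
  rw [U, mul_comm, ← rpow_def_of_pos (by positivity), div_rpow hC.le hp.le,
    div_eq_mul_inv (Ca α ^ _), ← rpow_neg hp.le, show -((4 - α) / 2) = -2 + α / 2 by ring,
    rpow_add hp, rpow_neg hp.le, rpow_two, sphericalDensity]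

lemma exp_U_mul_exp_U_div_norm_rpow {α : ℝ} (hα : α < 2) (x y : EuclideanSpace ℝ (Fin 2)) :
    exp (U α x) * exp (U α y) / ‖x - y‖ ^ α
      = Ca α ^ (4 - α) * sphericalDensity x * (sphericalDensity y * chordalSq x y ^ (-(α / 2))) := by
  have hp : 0 < 1 + ‖x‖ ^ 2 := by positivity
  have hq : 0 < 1 + ‖y‖ ^ 2 := by positivity
  have hchord : chordalSq x y ^ (-(α / 2))
      = (‖x - y‖ ^ α)⁻¹ * ((1 + ‖x‖ ^ 2) ^ (α / 2) * (1 + ‖y‖ ^ 2) ^ (α / 2)) := by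
    rw [chordalSq, rpow_neg (by positivity), div_rpow (by positivity) (by positivity),
      mul_rpow hp.le hq.le, ← rpow_natCast_mul (norm_nonneg _), Nat.cast_ofNat,
      mul_div_cancel₀ _ two_ne_zero, inv_div, div_eq_inv_mul]
  have hC : Ca α ^ (4 - α) = Ca α ^ ((4 - α) / 2) * Ca α ^ ((4 - α) / 2) := by
    rw [← rpow_add (Ca_pos hα)]; ring_nf
  rw [exp_U hα, exp_U hα, hchord, hC]
  ring

theorem double_integral_identity_general (α : ℝ) (hα' : α < 2) :
    (∫ x : EuclideanSpace ℝ (Fin 2), ∫ y : EuclideanSpace ℝ (Fin 2),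
        Real.exp (U α x) * Real.exp (U α y) / ‖x - y‖ ^ α)
      = 2 * (4 - α) * Real.pi := by
  have hE : finrank ℝ (EuclideanSpace ℝ (Fin 2)) = 2 := by simp
  have hs : -1 < -(α / 2) := by linarith
  simp_rw [exp_U_mul_exp_U_div_norm_rpow hα', integral_const_mul]
  rw [integral_congr_ae (ae_of_all _ fun x => by
      rw [integral_sphericalDensity_mul_chordalSq_rpow hE x hs]), integral_mul_const,
    integral_const_mul, integral_sphericalDensity hE, Ca_rpow hα']
  rw [show -(α / 2) + 1 = (2 - α) / 2 by ring]
  have : (2 : ℝ) - α ≠ 0 := by linarith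
  field_simp

theorem double_integral_identity (α : ℝ) (hα : 0 < α) (hα' : α < 2) :
    (∫ x : EuclideanSpace ℝ (Fin 2), ∫ y : EuclideanSpace ℝ (Fin 2),
        Real.exp (U α x) * Real.exp (U α y) / ‖x - y‖ ^ α)
      = 2 * (4 - α) * Real.pi :=
  double_integral_identity_general α hα'
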